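/- arXiv:2403.14220 — 2 statements merged into one kernel-verified Lean document; each statement's English description precedes it below -/
import Mathlib

section
/- It holds that |∫_Ω κ_x (κ_u(u) − κ_u(v)) ‖g‖² dμ| ≤ (C_{u'} C₀ / √κ̲) · (∫_Ω |u − v|² dμ)^{1/2} · (∫_Ω κ_x κ_u(u) ‖g‖² dμ)^{1/2}. -/
/-!
Pointwise, `|κu(u) - κu(v)| ≤ Cu' |u - v|`, and `κx ‖g‖² = (√κx ‖g‖)²` with one factor bounded by
`C₀` and the other by `√(κx κu(u)) ‖g‖ / √κlow`, since `κlow ≤ κu(u)`. The integrand is thus dominated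
by a multiple of `√((u - v)²) · √(κx κu(u) ‖g‖²)`, and Cauchy–Schwarz in `L²` finishes. Writing
`|u - v|` as `√((u - v)²)` makes both factors square roots of integrable functions, hence in `L²`
with no separate measurability argument.
-/

open MeasureTheory

section SqrtCauchySchwarz

variable {α : Type*} [MeasurableSpace α] {μ : Measure α} {F G : α → ℝ}

theorem MeasureTheory.Integrable.memLp_two_sqrt (hF : Integrable F μ) (hF0 : 0 ≤ᵐ[μ] F) :
    MemLp (fun x => √(F x)) 2 μ := by
  refine (memLp_two_iff_integrable_sq
    (Real.continuous_sqrt.comp_aestronglyMeasurable hF.1)).2 (hF.congr ?_)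
  filter_upwards [hF0] with x hx
  exact (Real.sq_sqrt hx).symm

theorem MeasureTheory.Integrable.sqrt_mul_sqrt (hF : Integrable F μ) (hF0 : 0 ≤ᵐ[μ] F)
    (hG : Integrable G μ) (hG0 : 0 ≤ᵐ[μ] G) :
    Integrable (fun x => √(F x) * √(G x)) μ :=
  (hF.memLp_two_sqrt hF0).integrable_mul (hG.memLp_two_sqrt hG0)

theorem integral_sqrt_mul_sqrt_le (hF : Integrable F μ) (hF0 : 0 ≤ᵐ[μ] F)
    (hG : Integrable G μ) (hG0 : 0 ≤ᵐ[μ] G) :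
    ∫ x, √(F x) * √(G x) ∂μ ≤ √(∫ x, F x ∂μ) * √(∫ x, G x ∂μ) := by
  have hsq : ∀ {H : α → ℝ}, 0 ≤ᵐ[μ] H → ∫ x, √(H x) ^ (2 : ℝ) ∂μ = ∫ x, H x ∂μ := fun hH0 =>
    integral_congr_ae (by filter_upwards [hH0] with x hx; simp [Real.sq_sqrt hx])
  have := integral_mul_le_Lp_mul_Lq_of_nonneg Real.HolderConjugate.two_two
    (.of_forall fun x => Real.sqrt_nonneg (F x)) (.of_forall fun x => Real.sqrt_nonneg (G x))
    (by simpa using hF.memLp_two_sqrt hF0) (by simpa using hG.memLp_two_sqrt hG0)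
  rwa [hsq hF0, hsq hG0, ← Real.sqrt_eq_rpow, ← Real.sqrt_eq_rpow] at this

end SqrtCauchySchwarz

theorem sqrt_mul_le_sqrt_mul_mul_sq_div_sqrt {k m a n : ℝ} (hk : 0 ≤ k) (hn : 0 ≤ n)
    (hm : 0 < m) (hma : m ≤ a) : √k * n ≤ √(k * a * n ^ 2) / √m := by
  rw [le_div_iff₀ (Real.sqrt_pos.2 hm), Real.sqrt_mul (mul_nonneg hk (hm.le.trans hma)),
    Real.sqrt_mul hk, Real.sqrt_sq hn]
  have : √m ≤ √a := Real.sqrt_le_sqrt hma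
  have : 0 ≤ √k * n := by positivity
  nlinarith

theorem abs_mul_sub_mul_sq_le {k a b n d L C m : ℝ} (hk : 0 ≤ k) (hn : 0 ≤ n) (hm : 0 < m)
    (hma : m ≤ a) (hab : |a - b| ≤ L * |d|) (hC : √k * n ≤ C) :
    |k * (a - b) * n ^ 2| ≤ L * C / √m * (√(d ^ 2) * √(k * a * n ^ 2)) := by
  have hkn : 0 ≤ √k * n := by positivity
  calc |k * (a - b) * n ^ 2| = |a - b| * (√k * n) ^ 2 := by
        rw [mul_pow, Real.sq_sqrt hk, abs_mul, abs_mul, abs_of_nonneg hk, abs_sq]; ring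
    _ ≤ L * |d| * (C * (√(k * a * n ^ 2) / √m)) := by
        rw [sq]
        gcongr
        · exact (abs_nonneg _).trans hab
        · exact hkn.trans hC
        · exact sqrt_mul_le_sqrt_mul_mul_sq_div_sqrt hk hn hm hma
    _ = L * C / √m * (√(d ^ 2) * √(k * a * n ^ 2)) := by rw [Real.sqrt_sq_eq_abs]; ring

theorem stmt4_general {Ω : Type*} [MeasurableSpace Ω] (μ : Measure Ω)
    {E : Type*} [NormedAddCommGroup E] [InnerProductSpace ℝ E]
    (κx : Ω → ℝ) (hκx_nonneg : ∀ x, 0 ≤ κx x)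
    (κu : ℝ → ℝ) (Cu' : ℝ) (hLip : ∀ s t : ℝ, |κu s - κu t| ≤ Cu' * |s - t|)
    (κlow : ℝ) (hκlow : 0 < κlow) (hκu_lb : ∀ s : ℝ, κlow ≤ κu s)
    (g : Ω → E)
    (C₀ : ℝ) (hC₀ : 0 ≤ C₀) (hgb : ∀ᵐ x ∂μ, Real.sqrt (κx x) * ‖g x‖ ≤ C₀)
    (u v : Ω → ℝ)
    (huv : Integrable (fun x => (u x - v x) ^ 2) μ)
    (hI1 : Integrable (fun x => κx x * κu (u x) * ‖g x‖ ^ 2) μ) :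
    |∫ x, κx x * (κu (u x) - κu (v x)) * ‖g x‖ ^ 2 ∂μ| ≤
      (Cu' * C₀ / Real.sqrt κlow) * Real.sqrt (∫ x, (u x - v x) ^ 2 ∂μ) *
        Real.sqrt (∫ x, κx x * κu (u x) * ‖g x‖ ^ 2 ∂μ) := by
  have hCu' : 0 ≤ Cu' := (abs_nonneg _).trans (by simpa using hLip 1 0)
  have huv0 : 0 ≤ᵐ[μ] fun x => (u x - v x) ^ 2 := .of_forall fun x => sq_nonneg _
  have hI10 : 0 ≤ᵐ[μ] fun x => κx x * κu (u x) * ‖g x‖ ^ 2 := .of_forall fun x =>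
    mul_nonneg (mul_nonneg (hκx_nonneg x) (hκlow.le.trans (hκu_lb _))) (sq_nonneg _)
  calc |∫ x, κx x * (κu (u x) - κu (v x)) * ‖g x‖ ^ 2 ∂μ|
      ≤ ∫ x, Cu' * C₀ / √κlow * (√((u x - v x) ^ 2) * √(κx x * κu (u x) * ‖g x‖ ^ 2)) ∂μ := by
        rw [← Real.norm_eq_abs]
        refine norm_integral_le_of_norm_le ((huv.sqrt_mul_sqrt huv0 hI1 hI10).const_mul _) ?_
        filter_upwards [hgb] with x hx
        exact abs_mul_sub_mul_sq_le (hκx_nonneg x) (norm_nonneg _) hκlow (hκu_lb _)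
          (hLip _ _) hx
    _ = Cu' * C₀ / √κlow * ∫ x, √((u x - v x) ^ 2) * √(κx x * κu (u x) * ‖g x‖ ^ 2) ∂μ :=
        integral_const_mul _ _
    _ ≤ Cu' * C₀ / √κlow * (√(∫ x, (u x - v x) ^ 2 ∂μ) *
          √(∫ x, κx x * κu (u x) * ‖g x‖ ^ 2 ∂μ)) := by
        gcongr
        exact integral_sqrt_mul_sqrt_le huv huv0 hI1 hI10
    _ = _ := by ring

theorem stmt4 {Ω : Type*} [MeasurableSpace Ω] (μ : Measure Ω)
    {E : Type*} [NormedAddCommGroup E] [InnerProductSpace ℝ E] [MeasurableSpace E]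
    (κx : Ω → ℝ) (hκxm : Measurable κx) (hκx_nonneg : ∀ x, 0 ≤ κx x)
    (κu : ℝ → ℝ) (Cu' : ℝ) (hLip : ∀ s t : ℝ, |κu s - κu t| ≤ Cu' * |s - t|)
    (κlow : ℝ) (hκlow : 0 < κlow) (hκu_lb : ∀ s : ℝ, κlow ≤ κu s)
    (g : Ω → E) (hgm : Measurable g)
    (C₀ : ℝ) (hC₀ : 0 ≤ C₀) (hgb : ∀ᵐ x ∂μ, Real.sqrt (κx x) * ‖g x‖ ≤ C₀)
    (u v : Ω → ℝ) (hum : Measurable u) (hvm : Measurable v)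
    (huv : Integrable (fun x => (u x - v x) ^ 2) μ)
    (hI1 : Integrable (fun x => κx x * κu (u x) * ‖g x‖ ^ 2) μ)
    (hI2 : Integrable (fun x => κx x * (κu (u x) - κu (v x)) * ‖g x‖ ^ 2) μ) :
    |∫ x, κx x * (κu (u x) - κu (v x)) * ‖g x‖ ^ 2 ∂μ| ≤
      (Cu' * C₀ / Real.sqrt κlow) * Real.sqrt (∫ x, (u x - v x) ^ 2 ∂μ) *
        Real.sqrt (∫ x, κx x * κu (u x) * ‖g x‖ ^ 2 ∂μ) :=
  stmt4_general μ κx hκx_nonneg κu Cu' hLip κlow hκlow hκu_lb g C₀ hC₀ hgb u v huv hI1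
end

section
/- Let γ ∈ [0,1), α ∈ (0, 1 − γ), and set G_α := α(1 − α − γ)/(1 − α). Then for all v₁, w₁ ∈ V₁ and v₂, w₂ ∈ V₂ one has α · (1/2)[(‖v₁‖² − ‖w₁‖²) + (‖v₂‖² − ‖w₂‖²) + ‖w₁ + w₂‖²] + (γ/2)(‖v₁ − w₁‖² + ‖v₂ − w₂‖²) ≥ (G_α/2)(‖v₁‖² + ‖v₂‖²) ≥ (G_α/4)‖v₁ + v₂‖². -/
open scoped RealInnerProductSpace

theorem stmt8 {H : Type*} [NormedAddCommGroup H] [InnerProductSpace ℝ H]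
    (V₁ V₂ : Submodule ℝ H) (γ : ℝ) (hγ0 : 0 ≤ γ) (hγ1 : γ < 1)
    (hangle : ∀ v₁ ∈ V₁, ∀ v₂ ∈ V₂, |⟪v₁, v₂⟫| ≤ γ * ‖v₁‖ * ‖v₂‖)
    (α : ℝ) (hα0 : 0 < α) (hα1 : α < 1 - γ)
    (Gα : ℝ) (hGα : Gα = α * (1 - α - γ) / (1 - α))
    (v₁ w₁ : H) (hv₁ : v₁ ∈ V₁) (hw₁ : w₁ ∈ V₁)
    (v₂ w₂ : H) (hv₂ : v₂ ∈ V₂) (hw₂ : w₂ ∈ V₂) :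
    α * ((1 : ℝ) / 2) *
          ((‖v₁‖ ^ 2 - ‖w₁‖ ^ 2) + (‖v₂‖ ^ 2 - ‖w₂‖ ^ 2) + ‖w₁ + w₂‖ ^ 2) +
        (γ / 2) * (‖v₁ - w₁‖ ^ 2 + ‖v₂ - w₂‖ ^ 2) ≥
      (Gα / 2) * (‖v₁‖ ^ 2 + ‖v₂‖ ^ 2) ∧
    (Gα / 2) * (‖v₁‖ ^ 2 + ‖v₂‖ ^ 2) ≥ (Gα / 4) * ‖v₁ + v₂‖ ^ 2 := by
  have hα' : (0:ℝ) < 1 - α := by linarith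
  have hG' : Gα * (1 - α) = α * (1 - α - γ) := by
    rw [hGα]; field_simp
  have hGnn : 0 ≤ Gα := by
    rw [hGα]
    apply div_nonneg
    · nlinarith
    · linarith
  -- scalar key inequality
  have key : ∀ a b : ℝ, Gα * a ^ 2 ≤ α * a ^ 2 - α * γ * b ^ 2 + γ * (a - b) ^ 2 := by
    intro a b
    have h := mul_nonneg hγ0 (sq_nonneg ((1 - α) * b - a))
    have hid : γ * ((1 - α) * b - a) ^ 2
        = (1 - α) * (α * a ^ 2 - α * γ * b ^ 2 + γ * (a - b) ^ 2 - Gα * a ^ 2) := by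
      linear_combination a ^ 2 * hG'
    have h2 : (1 - α) * 0 ≤ (1 - α) * (α * a ^ 2 - α * γ * b ^ 2 + γ * (a - b) ^ 2 - Gα * a ^ 2) := by
      rw [mul_zero]; linarith [hid ▸ h]
    have := le_of_mul_le_mul_left h2 hα'
    linarith
  have hw : ‖w₁ + w₂‖ ^ 2 = ‖w₁‖ ^ 2 + 2 * ⟪w₁, w₂⟫ + ‖w₂‖ ^ 2 := norm_add_sq_real w₁ w₂
  have hip : -(γ * ‖w₁‖ * ‖w₂‖) ≤ ⟪w₁, w₂⟫ := by
    have := abs_le.mp (hangle w₁ hw₁ w₂ hw₂)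
    linarith [this.1]
  have hip' : α * (-(γ * ‖w₁‖ * ‖w₂‖)) ≤ α * ⟪w₁, w₂⟫ :=
    mul_le_mul_of_nonneg_left hip hα0.le
  have hbd0 : γ * ‖w₁‖ * ‖w₂‖ ≤ γ / 2 * ‖w₁‖ ^ 2 + γ / 2 * ‖w₂‖ ^ 2 := by
    nlinarith [mul_nonneg hγ0 (sq_nonneg (‖w₁‖ - ‖w₂‖))]
  have hbd : α * (γ * ‖w₁‖ * ‖w₂‖) ≤ α * (γ / 2 * ‖w₁‖ ^ 2 + γ / 2 * ‖w₂‖ ^ 2) :=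
    mul_le_mul_of_nonneg_left hbd0 hα0.le
  have h1 : (‖v₁‖ - ‖w₁‖) ^ 2 ≤ ‖v₁ - w₁‖ ^ 2 := by
    calc (‖v₁‖ - ‖w₁‖) ^ 2 = |‖v₁‖ - ‖w₁‖| ^ 2 := (sq_abs _).symm
      _ ≤ ‖v₁ - w₁‖ ^ 2 := pow_le_pow_left₀ (abs_nonneg _) (abs_norm_sub_norm_le v₁ w₁) 2
  have h2 : (‖v₂‖ - ‖w₂‖) ^ 2 ≤ ‖v₂ - w₂‖ ^ 2 := by
    calc (‖v₂‖ - ‖w₂‖) ^ 2 = |‖v₂‖ - ‖w₂‖| ^ 2 := (sq_abs _).symm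
      _ ≤ ‖v₂ - w₂‖ ^ 2 := pow_le_pow_left₀ (abs_nonneg _) (abs_norm_sub_norm_le v₂ w₂) 2
  have h1' : γ * (‖v₁‖ - ‖w₁‖) ^ 2 ≤ γ * ‖v₁ - w₁‖ ^ 2 := mul_le_mul_of_nonneg_left h1 hγ0
  have h2' : γ * (‖v₂‖ - ‖w₂‖) ^ 2 ≤ γ * ‖v₂ - w₂‖ ^ 2 := mul_le_mul_of_nonneg_left h2 hγ0
  constructor
  · rw [hw]
    linarith [key ‖v₁‖ ‖w₁‖, key ‖v₂‖ ‖w₂‖, hip', hbd, h1', h2']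
  · have h4 : ‖v₁ + v₂‖ ^ 2 ≤ (‖v₁‖ + ‖v₂‖) ^ 2 :=
      pow_le_pow_left₀ (norm_nonneg _) (norm_add_le v₁ v₂) 2
    have h5 := mul_le_mul_of_nonneg_left h4 hGnn
    have h6 := mul_nonneg hGnn (sq_nonneg (‖v₁‖ - ‖v₂‖))
    nlinarith [h5, h6]
end
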